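/- arXiv:1409.1472 — 2 statements merged into one kernel-verified Lean document; each statement's English description precedes it below -/
import Mathlib

section
/- Let 1 ≤ n ≤ m be integers and ζ a real number. If λ_n(ζ) > 1, then λ_m(ζ) ≥ (n·λ_n(ζ) + n − m)/m. If moreover λ_m(ζ) > 1, then λ_m(ζ) = (n·λ_n(ζ) + n − m)/m. -/
/-- Distance from a real number to the nearest integer. -/
noncomputable def distNearestInt (a : ℝ) : ℝ := |a - round a|

/-- `max_{1 ≤ j ≤ k} ‖ζ^j x‖` for a positive integer `x`. -/
noncomputable def maxDist (k : ℕ) (ζ : ℝ) (x : ℕ) : ℝ :=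
  ⨆ j ∈ Finset.Icc 1 k, distNearestInt (ζ ^ j * x)

/-- The approximation constant `λ_k(ζ)`, as an extended real number in `[0,∞]`. -/
noncomputable def lambdaConst (k : ℕ) (ζ : ℝ) : EReal :=
  sSup (insert (0 : EReal) {e : EReal | ∃ η : ℝ, e = (η : EReal) ∧
    {x : ℕ | 0 < x ∧ 0 < maxDist k ζ x ∧ maxDist k ζ x ≤ (x : ℝ) ^ (-η)}.Infinite})

/-- The uniform approximation constant `λ̂_k(ζ)`, as an extended real number in `[0,∞]`. -/
noncomputable def lambdaHatConst (k : ℕ) (ζ : ℝ) : EReal :=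
  sSup (insert (0 : EReal) {e : EReal | ∃ η : ℝ, e = (η : EReal) ∧
    ∃ X₀ : ℝ, ∀ X : ℝ, X₀ ≤ X → ∃ x : ℕ, 1 ≤ x ∧ (x : ℝ) ≤ X ∧
      0 < maxDist k ζ x ∧ maxDist k ζ x ≤ X ^ (-η)})

/-- The dual approximation constant `w_k(ζ)`, as an extended real number in `[0,∞]`. -/
noncomputable def wConst (k : ℕ) (ζ : ℝ) : EReal :=
  sSup (insert (0 : EReal) {e : EReal | ∃ ν : ℝ, e = (ν : EReal) ∧
    ∀ X₀ : ℝ, ∃ X : ℝ, X₀ ≤ X ∧ ∃ p : Fin (k + 1) → ℤ,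
      (∀ j, |(p j : ℝ)| ≤ X) ∧
      0 < |∑ j : Fin (k + 1), ζ ^ (j : ℕ) * (p j : ℝ)| ∧
      |∑ j : Fin (k + 1), ζ ^ (j : ℕ) * (p j : ℝ)| ≤ X ^ (-ν)})

/-- The uniform dual approximation constant `ŵ_k(ζ)`, as an extended real number in `[0,∞]`. -/
noncomputable def wHatConst (k : ℕ) (ζ : ℝ) : EReal :=
  sSup (insert (0 : EReal) {e : EReal | ∃ ν : ℝ, e = (ν : EReal) ∧
    ∃ X₀ : ℝ, ∀ X : ℝ, X₀ ≤ X → ∃ p : Fin (k + 1) → ℤ,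
      (∀ j, |(p j : ℝ)| ≤ X) ∧
      0 < |∑ j : Fin (k + 1), ζ ^ (j : ℕ) * (p j : ℝ)| ∧
      |∑ j : Fin (k + 1), ζ ^ (j : ℕ) * (p j : ℝ)| ≤ X ^ (-ν)})

/-!
For `η > 1`, the integers `p_j` nearest to `ζ ^ j * x` (`j ≤ n`) are pinned down by the smallness
of `x ^ (1 - η)`: the integer `x p_{j+1} - p_1 p_j` has absolute value `< 1`, so it vanishes and
`p_j = r ^ j x` with `r = p_1 / x`. Then the denominator `b` of `r` satisfies `b ^ n ∣ x`, and
`‖ζ b‖ ≤ (b / x) ‖ζ x‖` makes `b` a good approximation denominator for `ζ` alone: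
`λ_1 ≥ n λ_n + n - 1`. Conversely, if `‖ζ q‖ ≤ q ^ (-w)` then `x = q ^ m` satisfies
`‖ζ ^ j x‖ ≪ q ^ (m - 1 - w)`, giving `m λ_m + m ≥ λ_1 + 1`. Hence `λ_1 + 1 = k λ_k + k` whenever
`λ_k > 1`, and the theorem compares `k = n` with `k = m`.
-/

open Filter Topology

lemma distNearestInt_le_abs_sub (a : ℝ) (z : ℤ) : distNearestInt a ≤ |a - z| := round_le a z

lemma distNearestInt_pos_of_irrational {a : ℝ} (ha : Irrational a) : 0 < distNearestInt a :=
  abs_pos.mpr (sub_ne_zero.mpr (ha.ne_int _))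

lemma one_div_le_distNearestInt {t : ℝ} {V : ℕ} (hV : 0 < V) {N : ℤ} (hN : t * V = N)
    (ht : 0 < distNearestInt t) : 1 / (V : ℝ) ≤ distNearestInt t := by
  have hV' : (0 : ℝ) < V := by exact_mod_cast hV
  have hz : (t - round t) * V = ((N - round t * V : ℤ) : ℝ) := by push_cast; rw [← hN]; ring
  have hne : N - round t * V ≠ 0 := by
    rintro h0
    rw [h0, Int.cast_zero, mul_eq_zero] at hz
    exact ht.ne' (by simp [distNearestInt, hz.resolve_right hV'.ne'])
  have h1 : (1 : ℝ) ≤ |((N - round t * V : ℤ) : ℝ)| := by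
    rw [← Int.cast_abs]; exact_mod_cast Int.one_le_abs hne
  rw [← hz, abs_mul, abs_of_pos hV'] at h1
  rw [div_le_iff₀ hV']
  exact h1

lemma maxDist_le {k : ℕ} {ζ c : ℝ} {x : ℕ} (hc : 0 ≤ c)
    (h : ∀ j ∈ Finset.Icc 1 k, distNearestInt (ζ ^ j * x) ≤ c) : maxDist k ζ x ≤ c :=
  Real.iSup_le (fun j => Real.iSup_le (h j) hc) hc

lemma le_maxDist {k j : ℕ} {ζ : ℝ} {x : ℕ} (hj : j ∈ Finset.Icc 1 k) :
    distNearestInt (ζ ^ j * x) ≤ maxDist k ζ x := by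
  have hbdd : BddAbove
      (Set.range fun i => ⨆ _ : i ∈ Finset.Icc 1 k, distNearestInt (ζ ^ i * x)) := by
    refine ⟨1 / 2, ?_⟩
    rintro _ ⟨i, rfl⟩
    by_cases hi : i ∈ Finset.Icc 1 k
    · simp only [ciSup_pos hi]; exact abs_sub_round _
    · simp only [hi, Real.iSup_of_isEmpty]; norm_num
  have h := le_ciSup hbdd j
  rwa [ciSup_pos hj] at h

lemma maxDist_one (ζ : ℝ) (x : ℕ) : maxDist 1 ζ x = distNearestInt (ζ * x) := by
  have h1 : (1 : ℕ) ∈ Finset.Icc 1 1 := by simp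
  refine le_antisymm (maxDist_le (abs_nonneg _) fun j hj => ?_)
    (by simpa using le_maxDist (ζ := ζ) (x := x) h1)
  obtain rfl : j = 1 := by simpa using hj
  simp

lemma exists_distNearestInt_pos {k : ℕ} {ζ : ℝ} {x : ℕ} (h : 0 < maxDist k ζ x) :
    ∃ j ∈ Finset.Icc 1 k, 0 < distNearestInt (ζ ^ j * x) := by
  by_contra! hall
  exact h.not_ge (maxDist_le le_rfl hall)

lemma maxDist_pos_of_irrational {k : ℕ} {ζ : ℝ} {x : ℕ} (hk : 1 ≤ k) (hζ : Irrational ζ)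
    (hx : 0 < x) : 0 < maxDist k ζ x := by
  have h := le_maxDist (ζ := ζ) (x := x) (Finset.mem_Icc.mpr ⟨le_rfl, hk⟩)
  rw [pow_one] at h
  exact (distNearestInt_pos_of_irrational (hζ.mul_natCast hx.ne')).trans_le h

def approxSet (k : ℕ) (ζ η : ℝ) : Set ℕ :=
  {x | 0 < x ∧ 0 < maxDist k ζ x ∧ maxDist k ζ x ≤ (x : ℝ) ^ (-η)}

lemma approxSet_anti {k : ℕ} {ζ η η' : ℝ} (h : η ≤ η') : approxSet k ζ η' ⊆ approxSet k ζ η :=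
  fun _ ⟨hx, hpos, hle⟩ =>
    ⟨hx, hpos, hle.trans (Real.rpow_le_rpow_of_exponent_le (by exact_mod_cast hx) (by linarith))⟩

lemma coe_le_lambdaConst {k : ℕ} {ζ η : ℝ} (h : (approxSet k ζ η).Infinite) :
    (η : EReal) ≤ lambdaConst k ζ :=
  le_sSup (Set.mem_insert_of_mem _ ⟨η, rfl, h⟩)

lemma lambdaConst_nonneg (k : ℕ) (ζ : ℝ) : 0 ≤ lambdaConst k ζ :=
  le_sSup (Set.mem_insert _ _)

lemma coe_le_lambdaConst_of_forall_lt {k : ℕ} {ζ c : ℝ}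
    (h : ∀ η < c, (approxSet k ζ η).Infinite) : (c : EReal) ≤ lambdaConst k ζ :=
  EReal.ge_of_forall_gt_iff_ge.mp fun η hη => coe_le_lambdaConst (h η (EReal.coe_lt_coe_iff.mp hη))

lemma infinite_approxSet_of_coe_lt {k : ℕ} {ζ η : ℝ} (hη : 0 ≤ η)
    (h : (η : EReal) < lambdaConst k ζ) : (approxSet k ζ η).Infinite := by
  obtain ⟨e, he, hlt⟩ := lt_sSup_iff.mp h
  rcases he with rfl | ⟨η', rfl, hinf⟩
  · exact absurd hlt (not_lt.mpr (EReal.coe_nonneg.mpr hη))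
  · exact hinf.mono (approxSet_anti (EReal.coe_lt_coe_iff.mp hlt).le)

lemma tendsto_natCast_rpow_neg {δ : ℝ} (hδ : 0 < δ) :
    Tendsto (fun x : ℕ => (x : ℝ) ^ (-δ)) atTop (𝓝 0) :=
  (tendsto_rpow_neg_atTop hδ).comp tendsto_natCast_atTop_atTop

lemma eventually_mul_rpow_neg_lt_one (C : ℝ) {δ : ℝ} (hδ : 0 < δ) :
    ∀ᶠ x : ℕ in atTop, C * (x : ℝ) ^ (-δ) < 1 := by
  have h := (tendsto_natCast_rpow_neg hδ).const_mul C
  rw [mul_zero] at h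
  exact h.eventually_lt_const one_pos

lemma Set.infinite_of_frequently_exists_le {α : Type*} {T : Set α} {g : α → ℝ}
    (hg : ∀ y ∈ T, 0 < g y) {u : ℕ → ℝ} (hu : Tendsto u atTop (𝓝 0))
    (h : ∃ᶠ x in atTop, ∃ y ∈ T, g y ≤ u x) : T.Infinite := by
  intro hfin
  rcases T.eq_empty_or_nonempty with rfl | hne
  · simp at h
  obtain ⟨y₀, hy₀, hmin⟩ := T.exists_min_image g hfin hne
  obtain ⟨x, ⟨y, hy, hyx⟩, hx⟩ := (h.and_eventually (hu.eventually_lt_const (hg y₀ hy₀))).exists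
  exact (hmin y hy).not_gt (hyx.trans_lt hx)

lemma irrational_of_infinite_approxSet {k : ℕ} {ζ η : ℝ} (hη : 0 < η)
    (h : (approxSet k ζ η).Infinite) : Irrational ζ := by
  rintro ⟨q, rfl⟩
  have hV : (0 : ℝ) < (q.den ^ k : ℕ) := by exact_mod_cast pow_pos q.den_pos k
  have hbound : ∀ x ∈ approxSet k q η, 1 / ((q.den ^ k : ℕ) : ℝ) ≤ maxDist k q x := by
    rintro x ⟨-, hpos, -⟩
    obtain ⟨j, hj, hdist⟩ := exists_distNearestInt_pos hpos
    refine (one_div_le_distNearestInt (pow_pos q.den_pos k) (N := q.num ^ j * x * q.den ^ (k - j))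
      ?_ hdist).trans (le_maxDist hj)
    have hjk : k = j + (k - j) := by have := (Finset.mem_Icc.mp hj).2; omega
    have hnum : (q : ℝ) * q.den = q.num := by exact_mod_cast Rat.mul_den_eq_num q
    push_cast
    rw [hjk, pow_add, Nat.add_sub_cancel_left, ← hnum]
    ring
  have hsmall := (tendsto_natCast_rpow_neg hη).eventually_lt_const (one_div_pos.mpr hV)
  obtain ⟨x, hx, hxsmall⟩ :=
    ((Nat.frequently_atTop_iff_infinite.mpr h).and_eventually hsmall).exists
  exact (hbound x hx).not_gt (hx.2.2.trans_lt hxsmall)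

lemma mul_eq_mul_of_abs_sub_le {x P Q R : ℤ} {α β e : ℝ} (hx : 0 < x)
    (hP : |α * x - P| ≤ e) (hQ : |β * x - Q| ≤ e) (hR : |α * β * x - R| ≤ e)
    (hsmall : (2 + |α| + |β|) * (x * e) < 1) : x * R = P * Q := by
  set εP := α * x - P
  set εQ := β * x - Q
  set εR := α * β * x - R
  have hx1 : (1 : ℝ) ≤ x := by exact_mod_cast hx
  have he0 : 0 ≤ e := (abs_nonneg _).trans hP
  have he : e ≤ 1 := by
    have h1 : e ≤ x * e := le_mul_of_one_le_left he0 hx1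
    have h2 : 2 * (x * e) ≤ (2 + |α| + |β|) * (x * e) := by
      gcongr
      linarith [abs_nonneg α, abs_nonneg β]
    linarith
  have hz : ((x * R - P * Q : ℤ) : ℝ) = α * x * εQ + β * x * εP - x * εR - εP * εQ := by
    push_cast; ring
  have hbound : |((x * R - P * Q : ℤ) : ℝ)| ≤ (2 + |α| + |β|) * (x * e) := by
    rw [hz]
    calc |α * x * εQ + β * x * εP - x * εR - εP * εQ|
        ≤ |α| * x * |εQ| + |β| * x * |εP| + x * |εR| + |εP| * |εQ| := by
          have h1 := abs_sub (α * x * εQ + β * x * εP - x * εR) (εP * εQ)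
          have h2 := abs_sub (α * x * εQ + β * x * εP) (x * εR)
          have h3 := abs_add_le (α * x * εQ) (β * x * εP)
          simp only [abs_mul, abs_of_pos (by linarith : (0 : ℝ) < x)] at h1 h2 h3
          linarith
      _ ≤ |α| * x * e + |β| * x * e + x * e + e * e := by gcongr
      _ ≤ (2 + |α| + |β|) * (x * e) := by nlinarith
  have hzero : x * R - P * Q = 0 :=
    Int.abs_lt_one_iff.mp (by exact_mod_cast (Int.cast_abs (R := ℝ) ▸ hbound.trans_lt hsmall))
  linarith

lemma Rat.den_pow_dvd_of_pow_mul_eq {q : ℚ} {n : ℕ} {x z : ℤ} (hx : x ≠ 0)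
    (h : q ^ n * x = z) : (q.den : ℤ) ^ n ∣ x := by
  have hq : q ^ n = Rat.divInt z x := by
    rw [Rat.divInt_eq_div, ← h]; field_simp
  have := Rat.den_dvd z x
  rwa [← hq, Rat.den_pow, Nat.cast_pow] at this

lemma round_pow_mul_eq_of_mem_approxSet {n : ℕ} {ζ η : ℝ} {x : ℕ} (hx : x ∈ approxSet n ζ η)
    (hsmall : (2 + |ζ| + (1 + |ζ|) ^ n) * (x * (x : ℝ) ^ (-η)) < 1) {j : ℕ}
    (hj : j ∈ Finset.Icc 1 n) :
    (round (ζ ^ j * x) : ℚ) = (round (ζ * x) / x : ℚ) ^ j * x := by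
  obtain ⟨hx0, -, hxle⟩ := hx
  have hxq : (x : ℚ) ≠ 0 := by exact_mod_cast hx0.ne'
  have hclose : ∀ i ∈ Finset.Icc 1 n, |ζ ^ i * x - round (ζ ^ i * x)| ≤ (x : ℝ) ^ (-η) :=
    fun i hi => (le_maxDist hi).trans hxle
  obtain ⟨hj1, hjn⟩ := Finset.mem_Icc.mp hj
  induction j, hj1 using Nat.le_induction with
  | base => field_simp
  | succ j hj1 ih =>
    have hrec : (x : ℤ) * round (ζ ^ (j + 1) * x) = round (ζ * x) * round (ζ ^ j * x) := by
      have hx1 : (1 : ℝ) ≤ x := by exact_mod_cast hx0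
      have hpow : |ζ ^ j| ≤ (1 + |ζ|) ^ n := by
        rw [abs_pow]
        exact (pow_le_pow_left₀ (abs_nonneg ζ) (by linarith) j).trans
          (pow_le_pow_right₀ (by linarith [abs_nonneg ζ]) (by omega))
      refine mul_eq_mul_of_abs_sub_le (α := ζ) (β := ζ ^ j) (by exact_mod_cast hx0) ?_
        (hclose j (by simp; omega)) ?_ ?_
      · simpa using hclose 1 (by simp; omega)
      · simpa [← pow_succ'] using hclose (j + 1) (by simp; omega)
      · refine lt_of_le_of_lt ?_ hsmall
        push_cast
        gcongr
    have hrecq : (x : ℚ) * round (ζ ^ (j + 1) * x) = round (ζ * x) * round (ζ ^ j * x) := by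
      exact_mod_cast hrec
    rw [ih (by simp; omega) (by omega)] at hrecq
    apply mul_left_cancel₀ hxq
    rw [hrecq, pow_succ]
    field_simp

lemma mul_rpow_neg_le_of_pow_le {b x η : ℝ} {n : ℕ} (hb : 1 ≤ b) (hbx : b ^ n ≤ x)
    (hη : 0 ≤ 1 + η) : b * x ^ (-(1 + η)) ≤ b ^ (-(n * η + n - 1)) := by
  have hb0 : 0 < b := by linarith
  calc b * x ^ (-(1 + η)) ≤ b * (b ^ n) ^ (-(1 + η)) := by
        have := Real.rpow_le_rpow_of_nonpos (pow_pos hb0 n) hbx (by linarith : -(1 + η) ≤ 0)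
        gcongr
    _ = b ^ (-(n * η + n - 1)) := by
        have he : -((n : ℝ) * η + n - 1) = 1 + n * -(1 + η) := by ring
        rw [← Real.rpow_natCast, ← Real.rpow_mul hb0.le, he, Real.rpow_add hb0, Real.rpow_one]

lemma exists_mem_approxSet_one_of_mem {n : ℕ} (hn : 1 ≤ n) {ζ η : ℝ} (hζ : Irrational ζ)
    (hη : 0 ≤ η) {x : ℕ} (hx : x ∈ approxSet n ζ η)
    (hsmall : (2 + |ζ| + (1 + |ζ|) ^ n) * (x * (x : ℝ) ^ (-η)) < 1) :
    ∃ b ∈ approxSet 1 ζ (n * η + n - 1), distNearestInt (ζ * b) ≤ (x : ℝ) ^ (-η) := by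
  have hx0 := hx.1
  have hxR : (0 : ℝ) < x := by exact_mod_cast hx0
  set p := round (ζ * x)
  set r : ℚ := p / x
  have hden : (r.den : ℤ) ^ n ∣ x := by
    refine Rat.den_pow_dvd_of_pow_mul_eq (z := round (ζ ^ n * x)) (by exact_mod_cast hx0.ne') ?_
    push_cast
    exact (round_pow_mul_eq_of_mem_approxSet hx hsmall (by simp [hn])).symm
  set b := r.den
  have hbx : (b : ℝ) ^ n ≤ x := by exact_mod_cast Int.le_of_dvd (by exact_mod_cast hx0) hden
  have hb1 : (1 : ℝ) ≤ b := by exact_mod_cast r.den_pos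
  have hbx' : (b : ℝ) ≤ x := (le_self_pow₀ hb1 (by omega)).trans hbx
  have hnum : (r.num : ℝ) = p / x * b := by
    have := congrArg (Rat.cast (K := ℝ)) (Rat.mul_den_eq_num r)
    push_cast [r] at this
    exact this.symm
  have hdist : distNearestInt (ζ * b) ≤ b * (x : ℝ) ^ (-(1 + η)) :=
    calc distNearestInt (ζ * b) ≤ |ζ * b - r.num| := distNearestInt_le_abs_sub _ _
      _ = |b / x * (ζ * x - p)| := by rw [hnum]; congr 1; field_simp
      _ = b / x * |ζ * x - p| := by rw [abs_mul, abs_of_pos (by positivity)]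
      _ ≤ b / x * (x : ℝ) ^ (-η) := by
          gcongr
          have h1 :=
            (le_maxDist (ζ := ζ) (x := x) (by simp [hn] : 1 ∈ Finset.Icc 1 n)).trans hx.2.2
          rwa [pow_one] at h1
      _ = b * (x : ℝ) ^ (-(1 + η)) := by
          rw [neg_add, Real.rpow_add hxR, Real.rpow_neg_one]; ring
  refine ⟨b, ⟨r.den_pos, maxDist_pos_of_irrational le_rfl hζ r.den_pos, ?_⟩, ?_⟩
  · rw [maxDist_one]
    exact hdist.trans (mul_rpow_neg_le_of_pow_le hb1 hbx (by linarith))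
  · refine hdist.trans ?_
    calc (b : ℝ) * (x : ℝ) ^ (-(1 + η)) ≤ x * (x : ℝ) ^ (-(1 + η)) := by gcongr
      _ = (x : ℝ) ^ (-η) := by rw [neg_add, Real.rpow_add hxR, Real.rpow_neg_one]; field_simp

theorem infinite_approxSet_one_of_infinite {n : ℕ} (hn : 1 ≤ n) {ζ η : ℝ} (hη : 1 < η)
    (h : (approxSet n ζ η).Infinite) : (approxSet 1 ζ (n * η + n - 1)).Infinite := by
  have hζ := irrational_of_infinite_approxSet (by linarith) h
  refine Set.infinite_of_frequently_exists_le (g := fun b => distNearestInt (ζ * b))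
    (fun b hb => by simpa [maxDist_one] using hb.2.1)
    (tendsto_natCast_rpow_neg (by linarith : 0 < η)) ?_
  refine ((Nat.frequently_atTop_iff_infinite.mpr h).and_eventually
    (eventually_mul_rpow_neg_lt_one (2 + |ζ| + (1 + |ζ|) ^ n) (by linarith : 0 < η - 1))).mono ?_
  rintro x ⟨hx, hsmall⟩
  refine exists_mem_approxSet_one_of_mem hn hζ (by linarith) hx ?_
  have hxR : (0 : ℝ) < x := by exact_mod_cast hx.1
  rwa [← Real.rpow_one_add' hxR.le (by linarith), show 1 + -η = -(η - 1) by ring]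

lemma mul_pow_mul_rpow_neg_le {Q K w η : ℝ} {m : ℕ} (hm : 1 ≤ m) (hQ : 0 < Q)
    (h : K * Q ^ (-(w + 1 - m - m * η)) ≤ 1) : K * Q ^ (m - 1) * Q ^ (-w) ≤ (Q ^ m) ^ (-η) := by
  have hsplit : K * Q ^ (m - 1) * Q ^ (-w) = K * Q ^ (-(w + 1 - m - m * η)) * (Q ^ m) ^ (-η) := by
    rw [← Real.rpow_natCast, ← Real.rpow_natCast, ← Real.rpow_mul hQ.le, mul_assoc, mul_assoc,
      ← Real.rpow_add hQ, ← Real.rpow_add hQ]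
    congr 2
    push_cast [Nat.cast_sub hm]
    ring
  rw [hsplit]
  exact mul_le_of_le_one_left (by positivity) h

lemma abs_pow_mul_pow_sub_le {ζ Q P : ℝ} (hQ : 1 ≤ Q) (hε : |ζ * Q - P| ≤ 1) {j m : ℕ}
    (hj : 1 ≤ j) (hjm : j ≤ m) :
    |ζ ^ j * Q ^ m - P ^ j * Q ^ (m - j)| ≤ m * (1 + |ζ|) ^ m * Q ^ (m - 1) * |ζ * Q - P| := by
  have hmax : max |ζ * Q| |P| ≤ (1 + |ζ|) * Q := by
    have hζQ : |ζ * Q| = |ζ| * Q := by rw [abs_mul, abs_of_pos (by linarith : (0 : ℝ) < Q)]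
    refine max_le (by rw [hζQ]; nlinarith) ?_
    have := abs_sub_abs_le_abs_sub P (ζ * Q)
    rw [abs_sub_comm, hζQ] at this
    linarith
  have hjm' : (j : ℝ) ≤ m := by exact_mod_cast hjm
  have hpow : (1 + |ζ|) ^ (j - 1) ≤ (1 + |ζ|) ^ m :=
    pow_le_pow_right₀ (by linarith [abs_nonneg ζ]) (by omega)
  have hsplit : Q ^ m = Q ^ (m - j) * Q ^ j := by rw [← pow_add, Nat.sub_add_cancel hjm]
  calc |ζ ^ j * Q ^ m - P ^ j * Q ^ (m - j)| = |Q ^ (m - j) * ((ζ * Q) ^ j - P ^ j)| := by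
        rw [hsplit]; congr 1; ring
    _ = Q ^ (m - j) * |(ζ * Q) ^ j - P ^ j| := by
        rw [abs_mul, abs_of_pos (pow_pos (by linarith) _)]
    _ ≤ Q ^ (m - j) * (|ζ * Q - P| * j * ((1 + |ζ|) * Q) ^ (j - 1)) := by
        gcongr
        exact (abs_pow_sub_pow_le _ _ _).trans (by gcongr)
    _ ≤ Q ^ (m - j) * (|ζ * Q - P| * m * ((1 + |ζ|) ^ m * Q ^ (j - 1))) := by
        rw [mul_pow]
        gcongr
    _ = m * (1 + |ζ|) ^ m * Q ^ (m - 1) * |ζ * Q - P| := by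
        rw [show m - 1 = (m - j) + (j - 1) by omega, pow_add]
        ring

lemma pow_mem_approxSet_of_mem {m : ℕ} (hm : 1 ≤ m) {ζ w η : ℝ} (hζ : Irrational ζ) (hw : 0 ≤ w)
    {q : ℕ} (hq : q ∈ approxSet 1 ζ w)
    (hsmall : m * (1 + |ζ|) ^ m * (q : ℝ) ^ (-(w + 1 - m - m * η)) ≤ 1) :
    q ^ m ∈ approxSet m ζ η := by
  obtain ⟨hq0, -, hqw⟩ := hq
  have hQ1 : (1 : ℝ) ≤ q := by exact_mod_cast hq0
  set p := round (ζ * q)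
  have hε : |ζ * q - p| ≤ (q : ℝ) ^ (-w) := by rwa [maxDist_one] at hqw
  have hε1 : |ζ * q - p| ≤ 1 := hε.trans (Real.rpow_le_one_of_one_le_of_nonpos hQ1 (by linarith))
  refine ⟨pow_pos hq0 m, maxDist_pos_of_irrational hm hζ (pow_pos hq0 m),
    maxDist_le (by positivity) fun j hj => ?_⟩
  obtain ⟨hj1, hjm⟩ := Finset.mem_Icc.mp hj
  calc distNearestInt (ζ ^ j * ↑(q ^ m)) ≤ |ζ ^ j * ↑(q ^ m) - ↑(p ^ j * q ^ (m - j) : ℤ)| :=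
        distNearestInt_le_abs_sub _ _
    _ ≤ m * (1 + |ζ|) ^ m * (q : ℝ) ^ (m - 1) * |ζ * q - p| := by
        push_cast
        exact abs_pow_mul_pow_sub_le hQ1 hε1 hj1 hjm
    _ ≤ m * (1 + |ζ|) ^ m * (q : ℝ) ^ (m - 1) * (q : ℝ) ^ (-w) := by gcongr
    _ ≤ ((q ^ m : ℕ) : ℝ) ^ (-η) := by
        push_cast
        exact mul_pow_mul_rpow_neg_le hm (by linarith) hsmall

theorem infinite_approxSet_of_infinite_approxSet_one {m : ℕ} (hm : 1 ≤ m) {ζ w η : ℝ}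
    (hw : 0 < w) (hη : m * η < w + 1 - m) (h : (approxSet 1 ζ w).Infinite) :
    (approxSet m ζ η).Infinite := by
  have hζ := irrational_of_infinite_approxSet hw h
  refine Nat.frequently_atTop_iff_infinite.mp
    ((tendsto_pow_atTop (α := ℕ) (n := m) (by omega)).frequently ?_)
  refine ((Nat.frequently_atTop_iff_infinite.mpr h).and_eventually
    (eventually_mul_rpow_neg_lt_one (m * (1 + |ζ|) ^ m) (δ := w + 1 - m - m * η)
      (by linarith))).mono ?_
  rintro q ⟨hq, hsmall⟩
  exact pow_mem_approxSet_of_mem hm hζ hw.le hq hsmall.le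

lemma mul_lambdaConst_add_le {k : ℕ} (hk : 1 ≤ k) {ζ : ℝ} (h : 1 < lambdaConst k ζ) :
    ((k : ℝ) : EReal) * lambdaConst k ζ + (k : ℝ) ≤ lambdaConst 1 ζ + 1 := by
  refine EReal.ge_of_forall_gt_iff_ge.mp fun z hz => ?_
  have hk0 : (0 : ℝ) < k := by exact_mod_cast hk
  have hlt : (((z - k) / k : ℝ) : EReal) < lambdaConst k ζ := by
    rw [EReal.coe_div, EReal.div_lt_iff (EReal.coe_pos.mpr hk0) (EReal.coe_ne_top _), mul_comm,
      EReal.coe_sub]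
    exact EReal.sub_lt_of_lt_add hz
  obtain ⟨η, hη, hηlt⟩ := EReal.exists_between_coe_real (max_lt hlt h)
  obtain ⟨hzη, hη1⟩ := max_lt_iff.mp hη
  have hzη : (z - k) / k < η := EReal.coe_lt_coe_iff.mp hzη
  have hη1 : 1 < η := by exact_mod_cast hη1
  have hle := coe_le_lambdaConst (infinite_approxSet_one_of_infinite hk hη1
    (infinite_approxSet_of_coe_lt (by linarith) hηlt))
  calc (z : EReal) = ((z - 1 : ℝ) : EReal) + 1 := by
        rw [← EReal.coe_one, ← EReal.coe_add, sub_add_cancel]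
    _ ≤ ((k * η + k - 1 : ℝ) : EReal) + 1 := by
        gcongr
        rw [div_lt_iff₀ hk0] at hzη
        linarith
    _ ≤ lambdaConst 1 ζ + 1 := by gcongr

lemma lambdaConst_one_add_one_le {k : ℕ} (hk : 1 ≤ k) (ζ : ℝ) :
    lambdaConst 1 ζ + 1 ≤ ((k : ℝ) : EReal) * lambdaConst k ζ + (k : ℝ) := by
  refine EReal.ge_of_forall_gt_iff_ge.mp fun z hz => ?_
  have hk0 : (0 : ℝ) < k := by exact_mod_cast hk
  rcases le_or_gt z k with hzk | hzk
  · calc (z : EReal) ≤ (k : ℝ) := EReal.coe_le_coe_iff.mpr hzk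
      _ ≤ ((k : ℝ) : EReal) * lambdaConst k ζ + (k : ℝ) :=
        le_add_of_nonneg_left
          (EReal.mul_nonneg (EReal.coe_nonneg.mpr hk0.le) (lambdaConst_nonneg k ζ))
  have hz1 : ((z - 1 : ℝ) : EReal) < lambdaConst 1 ζ := by
    rw [EReal.coe_sub, EReal.coe_one]
    exact EReal.sub_lt_of_lt_add hz
  obtain ⟨w, hzw, hwlt⟩ := EReal.exists_between_coe_real hz1
  have hzw' : z - 1 < w := EReal.coe_lt_coe_iff.mp hzw
  have hk1 : (1 : ℝ) ≤ k := by exact_mod_cast hk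
  have hw0 : 0 < w := by linarith
  have hle : (((w + 1 - k) / k : ℝ) : EReal) ≤ lambdaConst k ζ :=
    coe_le_lambdaConst_of_forall_lt fun η hη =>
      infinite_approxSet_of_infinite_approxSet_one hk hw0 (by rw [lt_div_iff₀ hk0] at hη; linarith)
        (infinite_approxSet_of_coe_lt hw0.le hwlt)
  rw [EReal.coe_div, EReal.div_le_iff_le_mul (EReal.coe_pos.mpr hk0) (EReal.coe_ne_top _)] at hle
  calc (z : EReal) ≤ ((w + 1 - k : ℝ) : EReal) + (k : ℝ) := by
        rw [← EReal.coe_add]; exact EReal.coe_le_coe_iff.mpr (by linarith)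
    _ ≤ ((k : ℝ) : EReal) * lambdaConst k ζ + (k : ℝ) := by gcongr

lemma lambdaConst_one_add_one_eq {k : ℕ} (hk : 1 ≤ k) {ζ : ℝ} (h : 1 < lambdaConst k ζ) :
    lambdaConst 1 ζ + 1 = ((k : ℝ) : EReal) * lambdaConst k ζ + (k : ℝ) :=
  le_antisymm (lambdaConst_one_add_one_le hk ζ) (mul_lambdaConst_add_le hk h)

theorem stmt6 (n m : ℕ) (hn : 1 ≤ n) (hnm : n ≤ m) (ζ : ℝ) :
    (1 < lambdaConst n ζ →
      (((n : ℝ) : EReal) * lambdaConst n ζ + ((n : ℝ) : EReal) - ((m : ℝ) : EReal)) /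
        ((m : ℝ) : EReal) ≤ lambdaConst m ζ) ∧
    (1 < lambdaConst n ζ → 1 < lambdaConst m ζ →
      lambdaConst m ζ =
        (((n : ℝ) : EReal) * lambdaConst n ζ + ((n : ℝ) : EReal) - ((m : ℝ) : EReal)) /
          ((m : ℝ) : EReal)) := by
  have hm : 1 ≤ m := hn.trans hnm
  have hm0 : (0 : ℝ) < m := by exact_mod_cast hm
  refine ⟨fun hlam_n => ?_, fun hlam_n hlam_m => ?_⟩
  · rw [EReal.div_le_iff_le_mul (EReal.coe_pos.mpr hm0) (EReal.coe_ne_top _),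
      ← lambdaConst_one_add_one_eq hn hlam_n]
    calc lambdaConst 1 ζ + 1 - (m : ℝ)
        ≤ ((m : ℝ) : EReal) * lambdaConst m ζ + (m : ℝ) - (m : ℝ) :=
          EReal.sub_le_sub (lambdaConst_one_add_one_le hm ζ) le_rfl
      _ = ((m : ℝ) : EReal) * lambdaConst m ζ := EReal.add_sub_cancel_right
  · rw [← lambdaConst_one_add_one_eq hn hlam_n, lambdaConst_one_add_one_eq hm hlam_m,
      EReal.add_sub_cancel_right, eq_comm,
      EReal.div_eq_iff (EReal.coe_ne_bot _) (EReal.coe_ne_top _) (EReal.coe_ne_zero.mpr hm0.ne'),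
      mul_comm]
end

section
/- Let k be a positive integer, ζ a real number, and set C_0 = (1/2)·k^{−1}·(1+|ζ|)^{1−k}. Suppose x is a positive integer with max_{1≤j≤k} ‖ζ^j x‖ < C_0·x^{−1}, let y be the integer closest to ζx, and write y/x = y_0/x_0 with integers x_0 > 0, y_0 and gcd(x_0, y_0) = 1. Then x_0^k divides x. Moreover, if x = N·x_0^k for a positive integer N, then max_{1≤j≤k} ‖ζ^j x‖ = N·max_{1≤j≤k} ‖ζ^j x_0^k‖. -/
/-! Put `q = y / x = y₀ / x₀`. The case `j = 1` of the hypothesis gives `|ζ - q| < C₀ x⁻²`, and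
`1 / (2 C₀) = k (1 + |ζ|)^(k-1)` bounds `|ζ^j - q^j| / |ζ - q|` for `j ≤ k`; so `x q^j` lies within
`1 / (2x)` of `ζ^j x`, hence within `1 / x` of an integer. Once `x₀^(j-1) ∣ x`, the number
`x q^j = x y₀^j / x₀^j` is a fraction with denominator `x₀ ≤ x`, so it must be an integer, and
coprimality gives `x₀^j ∣ x`. For `x = N x₀^k` the nearest integer to `ζ^j x` is then
`N y₀^j x₀^(k-j)`, and dividing by `N` shows that `y₀^j x₀^(k-j)` is nearest to `ζ^j x₀^k`, so each
distance scales by `N`. -/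

open Finset

lemma round_eq_of_abs_sub_lt_half {a : ℝ} {m : ℤ} (h : |a - m| < 1 / 2) : round a = m := by
  obtain ⟨h₁, h₂⟩ := abs_lt.mp h
  exact round_eq_iff.mpr ⟨by linarith, by linarith⟩

lemma Int.eq_of_abs_sub_lt_one {a b : ℤ} (h : |(a : ℝ) - b| < 1) : a = b := by
  have : |a - b| < 1 := by exact_mod_cast h
  exact sub_eq_zero.mp (Int.abs_lt_one_iff.mp this)

lemma Int.dvd_of_abs_div_sub_lt_inv {a m : ℤ} {b : ℕ} (hb : 0 < b)
    (h : |(a : ℝ) / b - m| < (b : ℝ)⁻¹) : (b : ℤ) ∣ a := by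
  have hbR : (0 : ℝ) < b := by exact_mod_cast hb
  have hlt : |(a : ℝ) - (m * b : ℤ)| < 1 := by
    have hmul : (a : ℝ) - (m * b : ℤ) = b * ((a : ℝ) / b - m) := by
      push_cast; field_simp
    rw [hmul, abs_mul, abs_of_pos hbR]
    calc _ < (b : ℝ) * (b : ℝ)⁻¹ := by gcongr
      _ = 1 := mul_inv_cancel₀ hbR.ne'
  exact ⟨m, by rw [Int.eq_of_abs_sub_lt_one hlt, mul_comm]⟩

lemma distNearestInt_eq_of_abs_sub_lt_half {a : ℝ} {m : ℤ} (h : |a - m| < 1 / 2) :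
    distNearestInt a = |a - m| := by
  rw [distNearestInt, round_eq_of_abs_sub_lt_half h]

lemma distNearestInt_natCast_mul {N : ℕ} {a : ℝ} {m : ℤ} (h : |N * a - N * m| < 1 / 2) :
    distNearestInt (N * a) = N * distNearestInt a := by
  rcases N.eq_zero_or_pos with rfl | hN
  · simp [distNearestInt]
  have hN1 : (1 : ℝ) ≤ N := by exact_mod_cast hN
  have habs : |(N : ℝ) * a - N * m| = N * |a - m| := by
    rw [← mul_sub, abs_mul, Nat.abs_cast]
  have hsmall : |a - m| < 1 / 2 := by nlinarith [abs_nonneg (a - m)]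
  have hN' : |(N : ℝ) * a - ((N * m : ℤ) : ℝ)| < 1 / 2 := by push_cast; exact h
  rw [distNearestInt_eq_of_abs_sub_lt_half hN', distNearestInt_eq_of_abs_sub_lt_half hsmall]
  push_cast
  exact habs

lemma distNearestInt_le_maxDist {k j : ℕ} (hj : j ∈ Icc 1 k) (ζ : ℝ) (x : ℕ) :
    distNearestInt (ζ ^ j * x) ≤ maxDist k ζ x := by
  refine le_ciSup₂ (f := fun j (_ : j ∈ Icc 1 k) => distNearestInt (ζ ^ j * x)) ?_ j hj
  refine ((Icc 1 k).finite_toSet.image fun j => distNearestInt (ζ ^ j * x)).bddAbove.mono ?_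
  rintro _ ⟨_, ⟨i, rfl⟩, ⟨hi, rfl⟩⟩
  exact ⟨i, hi, rfl⟩

lemma maxDist_eq_mul_of_forall {k : ℕ} {ζ c : ℝ} {x x' : ℕ} (hc : 0 ≤ c)
    (h : ∀ j ∈ Icc 1 k, distNearestInt (ζ ^ j * x) = c * distNearestInt (ζ ^ j * x')) :
    maxDist k ζ x = c * maxDist k ζ x' := by
  simp only [maxDist, Real.mul_iSup_of_nonneg hc]
  exact iSup_congr fun j => iSup_congr fun hj => h j hj

noncomputable def approxConst (k : ℕ) (ζ : ℝ) : ℝ :=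
  1 / 2 * (k : ℝ)⁻¹ * (1 + |ζ|) ^ (1 - (k : ℤ))

lemma approxConst_mul_eq_half {k : ℕ} (hk : 0 < k) (ζ : ℝ) :
    approxConst k ζ * (k * (1 + |ζ|) ^ (k - 1)) = 1 / 2 := by
  have hexp : 1 - (k : ℤ) = -((k - 1 : ℕ) : ℤ) := by push_cast [Nat.cast_sub hk]; ring
  have : (0 : ℝ) < 1 + |ζ| := by positivity
  rw [approxConst, hexp, zpow_neg, zpow_natCast]
  field_simp

lemma approxConst_le_half {k : ℕ} (hk : 0 < k) (ζ : ℝ) : approxConst k ζ ≤ 1 / 2 := by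
  have hpos : 0 ≤ approxConst k ζ := by unfold approxConst; positivity
  have hk1 : (1 : ℝ) ≤ k := by exact_mod_cast hk
  have hM : (1 : ℝ) ≤ (1 + |ζ|) ^ (k - 1) := one_le_pow₀ (by linarith [abs_nonneg ζ])
  nlinarith [approxConst_mul_eq_half hk ζ, mul_le_mul hk1 hM zero_le_one (by positivity)]

lemma abs_pow_mul_sub_mul_pow_lt {k : ℕ} (hk : 0 < k) {ζ : ℝ} {x : ℕ} (hx : 0 < x)
    (h : maxDist k ζ x < approxConst k ζ * (x : ℝ)⁻¹) {j : ℕ} (hj : j ∈ Icc 1 k) :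
    |ζ ^ j * x - x * (round (ζ * x) / x : ℝ) ^ j| < (2 * (x : ℝ))⁻¹ := by
  set q : ℝ := round (ζ * x) / x
  have hxR : (0 : ℝ) < x := by exact_mod_cast hx
  have hx1 : (1 : ℝ) ≤ x := by exact_mod_cast hx
  have hfirst : |ζ - q| * x < approxConst k ζ * (x : ℝ)⁻¹ := by
    have hdist : |ζ - q| * x = distNearestInt (ζ ^ 1 * x) := by
      have hmul : ζ * x - round (ζ * x) = (ζ - q) * x := by simp only [q]; field_simp
      rw [distNearestInt, pow_one, hmul, abs_mul, abs_of_pos hxR]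
    rw [hdist]
    exact (distNearestInt_le_maxDist (Finset.mem_Icc.mpr ⟨le_rfl, hk⟩) ζ x).trans_lt h
  have hq : |q| ≤ 1 + |ζ| := by
    have hC : approxConst k ζ * (x : ℝ)⁻¹ ≤ 1 :=
      calc _ ≤ 1 / 2 * 1 := mul_le_mul (approxConst_le_half hk ζ)
            (inv_le_one_of_one_le₀ hx1) (by positivity) (by norm_num)
        _ ≤ 1 := by norm_num
    have hζq : |ζ - q| ≤ 1 := by nlinarith [abs_nonneg (ζ - q)]
    have := abs_sub_abs_le_abs_sub q ζ
    rw [abs_sub_comm] at this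
    linarith
  obtain ⟨hj1, hjk⟩ := Finset.mem_Icc.mp hj
  have hM1 : 1 ≤ 1 + |ζ| := le_add_of_nonneg_right (abs_nonneg ζ)
  have hpow : |ζ ^ j - q ^ j| ≤ |ζ - q| * (k * (1 + |ζ|) ^ (k - 1)) := by
    refine (abs_pow_sub_pow_le ζ q j).trans ?_
    rw [mul_assoc]
    gcongr
    calc max |ζ| |q| ^ (j - 1) ≤ (1 + |ζ|) ^ (j - 1) := by
          gcongr
          exact max_le (by simp) hq
      _ ≤ (1 + |ζ|) ^ (k - 1) := pow_le_pow_right₀ hM1 (by omega)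
  calc |ζ ^ j * x - x * q ^ j| = |ζ ^ j - q ^ j| * x := by
        rw [mul_comm (x : ℝ), ← sub_mul, abs_mul, abs_of_pos hxR]
    _ ≤ |ζ - q| * x * (k * (1 + |ζ|) ^ (k - 1)) := by
        rw [mul_right_comm]; gcongr
    _ < approxConst k ζ * (x : ℝ)⁻¹ * (k * (1 + |ζ|) ^ (k - 1)) := by gcongr
    _ = (2 * (x : ℝ))⁻¹ := by
        linear_combination (x : ℝ)⁻¹ * approxConst_mul_eq_half hk ζ

lemma abs_mul_pow_sub_round_lt {k : ℕ} (hk : 0 < k) {ζ : ℝ} {x : ℕ} (hx : 0 < x)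
    (h : maxDist k ζ x < approxConst k ζ * (x : ℝ)⁻¹) {j : ℕ} (hj : j ∈ Icc 1 k) :
    |x * (round (ζ * x) / x : ℝ) ^ j - round (ζ ^ j * x)| < (x : ℝ)⁻¹ := by
  have hxR : (0 : ℝ) < x := by exact_mod_cast hx
  have hround : |ζ ^ j * x - round (ζ ^ j * x)| < (2 * (x : ℝ))⁻¹ :=
    calc _ ≤ maxDist k ζ x := distNearestInt_le_maxDist hj ζ x
      _ < approxConst k ζ * (x : ℝ)⁻¹ := h
      _ ≤ 1 / 2 * (x : ℝ)⁻¹ := by gcongr; exact approxConst_le_half hk ζ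
      _ = (2 * (x : ℝ))⁻¹ := by field_simp
  calc _ ≤ |ζ ^ j * x - x * (round (ζ * x) / x : ℝ) ^ j| + |ζ ^ j * x - round (ζ ^ j * x)| := by
        rw [abs_sub_comm (ζ ^ j * x)]; exact abs_sub_le _ _ _
    _ < (2 * (x : ℝ))⁻¹ + (2 * (x : ℝ))⁻¹ := add_lt_add (abs_pow_mul_sub_mul_pow_lt hk hx h hj) hround
    _ = (x : ℝ)⁻¹ := by field_simp; norm_num

lemma pow_dvd_of_forall_abs_mul_div_pow_sub_lt {x x₀ k : ℕ} {y₀ : ℤ} (hx : 0 < x)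
    (hx₀x : x₀ ∣ x) (hcop : IsCoprime (x₀ : ℤ) y₀)
    (hclose : ∀ j ∈ Icc 1 k, ∃ m : ℤ, |x * ((y₀ : ℝ) / x₀) ^ j - m| < (x : ℝ)⁻¹) :
    x₀ ^ k ∣ x := by
  have hx₀ : 0 < x₀ := Nat.pos_of_dvd_of_pos hx₀x hx
  have hx₀R : (0 : ℝ) < x₀ := by exact_mod_cast hx₀
  have hinv : (x : ℝ)⁻¹ ≤ (x₀ : ℝ)⁻¹ := by
    gcongr; exact_mod_cast Nat.le_of_dvd hx hx₀x
  induction k with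
  | zero => simp
  | succ n ih =>
    obtain ⟨s, rfl⟩ := ih fun j hj => hclose j (by simp only [Finset.mem_Icc] at hj ⊢; omega)
    obtain ⟨m, hm⟩ := hclose (n + 1) (by simp)
    have hrat : ((x₀ ^ n * s : ℕ) : ℝ) * ((y₀ : ℝ) / x₀) ^ (n + 1) =
        ((s * y₀ ^ (n + 1) : ℤ) : ℝ) / x₀ := by
      have := hx₀R.ne'
      push_cast
      rw [div_pow, pow_succ (x₀ : ℝ)]
      field_simp
    rw [hrat] at hm
    have hdvd : (x₀ : ℤ) ∣ s * y₀ ^ (n + 1) := Int.dvd_of_abs_div_sub_lt_inv hx₀ (hm.trans_le hinv)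
    obtain ⟨t, rfl⟩ := Int.natCast_dvd_natCast.mp (hcop.pow_right.dvd_of_dvd_mul_right hdvd)
    exact ⟨t, by ring⟩

lemma maxDist_mul_pow_eq_of_forall_abs_sub_lt {k N x₀ : ℕ} {ζ : ℝ} {y₀ : ℤ} (hx₀ : x₀ ≠ 0)
    (hclose : ∀ j ∈ Icc 1 k,
      |ζ ^ j * ((N * x₀ ^ k : ℕ) : ℝ) - (N * x₀ ^ k : ℕ) * ((y₀ : ℝ) / x₀) ^ j| < 1 / 2) :
    maxDist k ζ (N * x₀ ^ k) = N * maxDist k ζ (x₀ ^ k) := by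
  refine maxDist_eq_mul_of_forall (Nat.cast_nonneg N) fun j hj => ?_
  have hjk := (Finset.mem_Icc.mp hj).2
  have hrat : ((N * x₀ ^ k : ℕ) : ℝ) * ((y₀ : ℝ) / x₀) ^ j =
      N * ((y₀ ^ j * x₀ ^ (k - j) : ℤ) : ℝ) := by
    have hpow : (x₀ : ℝ) ^ k = x₀ ^ (k - j) * x₀ ^ j := by rw [← pow_add, Nat.sub_add_cancel hjk]
    have : (x₀ : ℝ) ≠ 0 := by exact_mod_cast hx₀
    push_cast
    rw [hpow, div_pow]
    field_simp
  have hmul : ζ ^ j * ((N * x₀ ^ k : ℕ) : ℝ) = N * (ζ ^ j * ((x₀ ^ k : ℕ) : ℝ)) := by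
    push_cast; ring
  rw [hmul]
  refine distNearestInt_natCast_mul (m := y₀ ^ j * x₀ ^ (k - j)) ?_
  rw [← hmul, ← hrat]
  exact hclose j hj

theorem stmt9_general (k : ℕ) (hk : 0 < k) (ζ : ℝ) (C₀ : ℝ)
    (hC₀ : C₀ = 1 / 2 * (k : ℝ)⁻¹ * (1 + |ζ|) ^ (1 - (k : ℤ)))
    (x : ℕ) (hx : 0 < x) (h : maxDist k ζ x < C₀ * (x : ℝ)⁻¹)
    (y : ℤ) (hy : y = round (ζ * x))
    (x₀ : ℕ) (y₀ : ℤ) (hcop : Int.gcd (x₀ : ℤ) y₀ = 1)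
    (hfrac : y * (x₀ : ℤ) = y₀ * (x : ℤ)) :
    x₀ ^ k ∣ x ∧
    (∀ N : ℕ, 0 < N → x = N * x₀ ^ k →
      maxDist k ζ x = N * maxDist k ζ (x₀ ^ k)) := by
  subst hC₀ hy
  have hxR : (1 : ℝ) ≤ x := by exact_mod_cast hx
  have hcoprime : IsCoprime (x₀ : ℤ) y₀ := Int.isCoprime_iff_gcd_eq_one.mpr hcop
  have hx₀x : x₀ ∣ x :=
    Int.natCast_dvd_natCast.mp (hcoprime.dvd_of_dvd_mul_left ⟨round (ζ * x), by linarith⟩)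
  have hx₀ : x₀ ≠ 0 := (Nat.pos_of_dvd_of_pos hx₀x hx).ne'
  have hq : (round (ζ * x) : ℝ) / x = y₀ / x₀ := by
    rw [div_eq_div_iff (by positivity) (by exact_mod_cast hx₀)]
    exact_mod_cast hfrac
  refine ⟨pow_dvd_of_forall_abs_mul_div_pow_sub_lt hx hx₀x hcoprime fun j hj =>
    ⟨_, hq ▸ abs_mul_pow_sub_round_lt hk hx h hj⟩, ?_⟩
  rintro N - rfl
  refine maxDist_mul_pow_eq_of_forall_abs_sub_lt hx₀ fun j hj =>
    (hq ▸ abs_pow_mul_sub_mul_pow_lt hk hx h hj).trans_le ?_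
  rw [inv_le_comm₀ (by positivity) (by norm_num)]
  linarith

theorem stmt9 (k : ℕ) (hk : 0 < k) (ζ : ℝ) (C₀ : ℝ)
    (hC₀ : C₀ = 1 / 2 * (k : ℝ)⁻¹ * (1 + |ζ|) ^ (1 - (k : ℤ)))
    (x : ℕ) (hx : 0 < x) (h : maxDist k ζ x < C₀ * (x : ℝ)⁻¹)
    (y : ℤ) (hy : y = round (ζ * x))
    (x₀ : ℕ) (y₀ : ℤ) (hx₀ : 0 < x₀) (hcop : Int.gcd (x₀ : ℤ) y₀ = 1)
    (hfrac : y * (x₀ : ℤ) = y₀ * (x : ℤ)) :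
    x₀ ^ k ∣ x ∧
    (∀ N : ℕ, 0 < N → x = N * x₀ ^ k →
      maxDist k ζ x = N * maxDist k ζ (x₀ ^ k)) :=
  stmt9_general k hk ζ C₀ hC₀ x hx h y hy x₀ y₀ hcop hfrac
end
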